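/- The optimal value of problem (P1) with the anyput state throughput T_w = ν_w·γ_w equals the optimal value of problem (P3); that is, the supremum of Σ_{w∈W} π_w ν_w γ_w over all distributions π feasible for (P1) equals the supremum of Σ_i β_i over all (α,β,χ) feasible for (P3). -/

import Mathlib

open Finset

inductive NodeState : Type
  | s | l | x
deriving DecidableEq

instance : Fintype NodeState :=
  ⟨{NodeState.s, NodeState.l, NodeState.x}, fun a => by cases a <;> simp⟩

abbrev NetState (N : ℕ) := Fin N → NodeState

/-- Number of nodes in transmit state. -/
def numTransmit {N : ℕ} (w : NetState N) : ℕ :=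
  (univ.filter fun i => w i = NodeState.x).card

/-- Number of nodes in listen state. -/
def numListen {N : ℕ} (w : NetState N) : ℕ :=
  (univ.filter fun i => w i = NodeState.l).card

/-- The (finite) set `W` of collision-free network states. -/
def CF (N : ℕ) : Finset (NetState N) :=
  univ.filter fun w => numTransmit w ≤ 1

/-- Indicator `ν_w` that exactly one node is transmitting. -/
def nu {N : ℕ} (w : NetState N) : ℝ := if numTransmit w = 1 then 1 else 0

/-- Indicator `γ_w` that at least one node is listening. -/
def gam {N : ℕ} (w : NetState N) : ℝ := if 0 < numListen w then 1 else 0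

/-- A probability distribution on `W`, feasible for problem (P1). -/
def P1Feasible (N : ℕ) (L X ρ : Fin N → ℝ) (π : NetState N → ℝ) : Prop :=
  (∀ w, 0 ≤ π w) ∧ (∀ w ∉ CF N, π w = 0) ∧ (∑ w ∈ CF N, π w = 1) ∧
  (∀ i, (∑ w ∈ (CF N).filter (fun w => w i = NodeState.l), π w) * L i
      + (∑ w ∈ (CF N).filter (fun w => w i = NodeState.x), π w) * X i ≤ ρ i)

/-- Feasibility for problem (P3). -/
def P3Feasible (N : ℕ) (L X ρ : Fin N → ℝ) (α β : Fin N → ℝ)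
    (χ : Fin N → Fin N → ℝ) : Prop :=
  (∀ i, α i ∈ Set.Icc (0 : ℝ) 1) ∧ (∀ i, β i ∈ Set.Icc (0 : ℝ) 1) ∧
  (∀ i j, i ≠ j → 0 ≤ χ i j) ∧
  (∀ i, α i * L i + β i * X i ≤ ρ i) ∧
  (∀ i, α i + β i ≤ 1) ∧ (∑ i, β i ≤ 1) ∧
  (∀ i, β i ≤ ∑ j ∈ univ.erase i, χ i j) ∧
  (∀ j, α j = ∑ i ∈ univ.erase j, χ i j)

/-! Both optimal values are suprema of one and the same set of numbers. A schedule `π` gives a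
point of (P3) with the same value: `β i` is the probability that `i` transmits while somebody
listens, and each such slot is credited to its listeners in equal shares `χ i j`; as at most one
node transmits, the credits `α j` of a listener never exceed its listening time. Conversely, a point
of (P3) is realised by the schedule in which `i` transmits to `j` alone with probability
`a i j = χ i j β i / ∑ₖ χ i k` and everybody sleeps otherwise. -/

section

variable {N : ℕ}

noncomputable def nodeInd (w : NetState N) (i : Fin N) (st : NodeState) : ℝ :=
  if w i = st then 1 else 0

noncomputable def stateMean (π f : NetState N → ℝ) : ℝ := ∑ w ∈ CF N, π w * f w

lemma mem_CF_iff {w : NetState N} : w ∈ CF N ↔ numTransmit w ≤ 1 := by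
  simp [CF]

lemma nodeInd_nonneg (w : NetState N) (i : Fin N) (st : NodeState) : 0 ≤ nodeInd w i st := by
  unfold nodeInd; split_ifs <;> norm_num

lemma sum_nodeInd_transmit (w : NetState N) : ∑ i, nodeInd w i .x = numTransmit w := by
  simp [nodeInd, numTransmit]

lemma gam_nonneg (w : NetState N) : 0 ≤ gam w := by
  unfold gam; split_ifs <;> norm_num

lemma gam_le_one (w : NetState N) : gam w ≤ 1 := by
  unfold gam; split_ifs <;> norm_num

lemma nu_le_one (w : NetState N) : nu w ≤ 1 := by
  unfold nu; split_ifs <;> norm_num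

lemma nu_eq_numTransmit {w : NetState N} (hw : w ∈ CF N) : nu w = numTransmit w := by
  rcases Nat.le_one_iff_eq_zero_or_eq_one.mp (mem_CF_iff.mp hw) with h | h <;> simp [nu, h]

/-- A transmitting node's slot is credited in equal shares to the nodes listening in it;
averaged over the schedule, this is the `χ` of (P3). -/
noncomputable def listenShare (w : NetState N) (i j : Fin N) : ℝ :=
  if w i = .x ∧ w j = .l then (numListen w : ℝ)⁻¹ else 0

lemma listenShare_nonneg (w : NetState N) (i j : Fin N) : 0 ≤ listenShare w i j := by
  unfold listenShare; split_ifs <;> positivity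

lemma sum_listenShare_row (w : NetState N) (i : Fin N) :
    ∑ j ∈ univ.erase i, listenShare w i j = nodeInd w i .x * gam w := by
  by_cases hi : w i = .x
  · have hlisten : (univ.erase i).filter (fun j => w j = .l) = univ.filter (fun j => w j = .l) := by
      rw [Finset.filter_erase, Finset.erase_eq_of_notMem (by simp [hi])]
    have hcard : ∑ j ∈ univ.erase i, listenShare w i j = numListen w * (numListen w : ℝ)⁻¹ := by
      simp only [listenShare, hi, true_and]
      rw [← Finset.sum_filter, hlisten, Finset.sum_const, nsmul_eq_mul]
      rfl
    rw [hcard, nodeInd, if_pos hi, one_mul, gam]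
    split_ifs with hpos
    · exact mul_inv_cancel₀ (by positivity)
    · simp [Nat.eq_zero_of_not_pos hpos]
  · simp [listenShare, nodeInd, hi]

lemma sum_listenShare_col {w : NetState N} (hw : w ∈ CF N) (j : Fin N) :
    ∑ i ∈ univ.erase j, listenShare w i j ≤ nodeInd w j .l := by
  by_cases hj : w j = .l
  · have hlisten : 1 ≤ (numListen w : ℝ) := by
      exact_mod_cast Finset.card_pos.mpr ⟨j, by simp [hj]⟩
    calc ∑ i ∈ univ.erase j, listenShare w i j
        ≤ ∑ i, nodeInd w i .x * (numListen w : ℝ)⁻¹ := by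
          rw [← Finset.sum_erase_add _ _ (Finset.mem_univ j)]
          refine le_add_of_le_of_nonneg (le_of_eq (Finset.sum_congr rfl fun i _ => ?_))
            (mul_nonneg (nodeInd_nonneg _ _ _) (by positivity))
          simp [listenShare, nodeInd, hj]
      _ = numTransmit w * (numListen w : ℝ)⁻¹ := by rw [← Finset.sum_mul, sum_nodeInd_transmit]
      _ ≤ 1 * 1 := by
          gcongr
          · exact_mod_cast mem_CF_iff.mp hw
          · exact inv_le_one_of_one_le₀ hlisten
      _ = nodeInd w j .l := by simp [nodeInd, hj]
  · simp [listenShare, nodeInd, hj]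

lemma sum_nodeInd_transmit_mul_gam {w : NetState N} (hw : w ∈ CF N) :
    ∑ i, nodeInd w i .x * gam w = nu w * gam w := by
  rw [← Finset.sum_mul, sum_nodeInd_transmit, nu_eq_numTransmit hw]

section stateMean

variable (π : NetState N → ℝ)

lemma stateMean_congr {f g : NetState N → ℝ} (h : ∀ w ∈ CF N, f w = g w) :
    stateMean π f = stateMean π g :=
  Finset.sum_congr rfl fun w hw => by rw [h w hw]

lemma sum_stateMean {ι : Type*} (s : Finset ι) (f : ι → NetState N → ℝ) :
    ∑ i ∈ s, stateMean π (f i) = stateMean π (fun w => ∑ i ∈ s, f i w) := by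
  simp only [stateMean, Finset.mul_sum]
  exact Finset.sum_comm

lemma stateMean_add (f g : NetState N → ℝ) :
    stateMean π f + stateMean π g = stateMean π (fun w => f w + g w) := by
  simp only [stateMean, mul_add, Finset.sum_add_distrib]

lemma sum_filter_CF_eq_stateMean (i : Fin N) (st : NodeState) :
    ∑ w ∈ (CF N).filter (fun w => w i = st), π w = stateMean π (nodeInd · i st) := by
  simp [stateMean, nodeInd, Finset.sum_filter]

lemma stateMean_add_left (π' f : NetState N → ℝ) :
    stateMean (π + π') f = stateMean π f + stateMean π' f := by
  simp only [stateMean, Pi.add_apply, add_mul, Finset.sum_add_distrib]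

lemma stateMean_sum_left {ι : Type*} (s : Finset ι) (π : ι → NetState N → ℝ)
    (f : NetState N → ℝ) : stateMean (∑ i ∈ s, π i) f = ∑ i ∈ s, stateMean (π i) f := by
  simp only [stateMean, Finset.sum_apply, Finset.sum_mul]
  exact Finset.sum_comm

variable {π}

lemma stateMean_mono (hπ : ∀ w, 0 ≤ π w) {f g : NetState N → ℝ} (h : ∀ w ∈ CF N, f w ≤ g w) :
    stateMean π f ≤ stateMean π g :=
  Finset.sum_le_sum fun w hw => mul_le_mul_of_nonneg_left (h w hw) (hπ w)

lemma stateMean_nonneg (hπ : ∀ w, 0 ≤ π w) {f : NetState N → ℝ} (h : ∀ w ∈ CF N, 0 ≤ f w) :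
    0 ≤ stateMean π f :=
  Finset.sum_nonneg fun w hw => mul_nonneg (hπ w) (h w hw)

end stateMean

lemma p1Feasible_iff {L X ρ : Fin N → ℝ} {π : NetState N → ℝ} :
    P1Feasible N L X ρ π ↔ (∀ w, 0 ≤ π w) ∧ (∀ w ∉ CF N, π w = 0) ∧
      stateMean π (fun _ => 1) = 1 ∧
      ∀ i, stateMean π (nodeInd · i .l) * L i + stateMean π (nodeInd · i .x) * X i ≤ ρ i := by
  simp only [P1Feasible, sum_filter_CF_eq_stateMean, stateMean, mul_one]

theorem exists_P3Feasible_of_P1Feasible {L X ρ : Fin N → ℝ} (hL : ∀ i, 0 ≤ L i)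
    (hX : ∀ i, 0 ≤ X i) {π : NetState N → ℝ} (hπ : P1Feasible N L X ρ π) :
    ∃ α β : Fin N → ℝ, ∃ χ : Fin N → Fin N → ℝ, P3Feasible N L X ρ α β χ ∧
      ∑ i, β i = stateMean π (fun w => nu w * gam w) := by
  obtain ⟨hπ0, -, hπ1, hρ⟩ := p1Feasible_iff.mp hπ
  set χ : Fin N → Fin N → ℝ := fun i j => stateMean π (listenShare · i j)
  set β : Fin N → ℝ := fun i => stateMean π (fun w => nodeInd w i .x * gam w)
  set α : Fin N → ℝ := fun j => ∑ i ∈ univ.erase j, χ i j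
  have hχ0 (i j : Fin N) : 0 ≤ χ i j :=
    stateMean_nonneg hπ0 fun w _ => listenShare_nonneg w i j
  have hβ0 (i : Fin N) : 0 ≤ β i :=
    stateMean_nonneg hπ0 fun w _ => mul_nonneg (nodeInd_nonneg w i _) (gam_nonneg w)
  have hα0 (j : Fin N) : 0 ≤ α j := Finset.sum_nonneg fun i _ => hχ0 i j
  have hβ_row (i : Fin N) : ∑ j ∈ univ.erase i, χ i j = β i := by
    rw [sum_stateMean]
    exact stateMean_congr π fun w _ => sum_listenShare_row w i
  have hα_listen (j : Fin N) : α j ≤ stateMean π (nodeInd · j .l) :=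
    (sum_stateMean π _ _).trans_le (stateMean_mono hπ0 fun w hw => sum_listenShare_col hw j)
  have hβ_transmit (i : Fin N) : β i ≤ stateMean π (nodeInd · i .x) :=
    stateMean_mono hπ0 fun w _ => mul_le_of_le_one_right (nodeInd_nonneg w i _) (gam_le_one w)
  have hαβ (i : Fin N) : α i + β i ≤ 1 := by
    refine (add_le_add (hα_listen i) (hβ_transmit i)).trans ?_
    rw [stateMean_add, ← hπ1]
    refine stateMean_mono hπ0 fun w _ => ?_
    unfold nodeInd
    split_ifs <;> simp_all
  have hvalue : ∑ i, β i = stateMean π (fun w => nu w * gam w) := by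
    rw [sum_stateMean]
    exact stateMean_congr π fun w hw => sum_nodeInd_transmit_mul_gam hw
  refine ⟨α, β, χ, ⟨fun i => ⟨hα0 i, ?_⟩, fun i => ⟨hβ0 i, ?_⟩, fun i j _ => hχ0 i j, fun i => ?_,
    hαβ, ?_, fun i => (hβ_row i).ge, fun j => rfl⟩, hvalue⟩
  · linarith [hαβ i, hβ0 i]
  · linarith [hαβ i, hα0 i]
  · calc α i * L i + β i * X i
        ≤ stateMean π (nodeInd · i .l) * L i + stateMean π (nodeInd · i .x) * X i := by
          gcongr
          · exact hL i
          · exact hα_listen i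
          · exact hX i
          · exact hβ_transmit i
      _ ≤ ρ i := hρ i
  · rw [hvalue, ← hπ1]
    exact stateMean_mono hπ0 fun w _ => mul_le_one₀ (nu_le_one w) (gam_nonneg w) (gam_le_one w)

def sleepState : NetState N := fun _ => .s

def pairState (i j : Fin N) : NetState N :=
  fun k => if k = i then .x else if k = j then .l else .s

lemma sleepState_mem_CF : sleepState ∈ CF N := by
  simp [mem_CF_iff, numTransmit, sleepState]

lemma pairState_eq_transmit_iff {i j k : Fin N} : pairState i j k = .x ↔ k = i := by
  unfold pairState; split_ifs <;> simp_all

lemma pairState_eq_listen_iff {i j : Fin N} (hij : i ≠ j) {k : Fin N} :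
    pairState i j k = .l ↔ k = j := by
  unfold pairState; split_ifs <;> simp_all

lemma numTransmit_pairState (i j : Fin N) : numTransmit (pairState i j) = 1 :=
  Finset.card_eq_one.mpr ⟨i, by ext k; simp [pairState_eq_transmit_iff]⟩

lemma pairState_mem_CF (i j : Fin N) : pairState i j ∈ CF N := by
  rw [mem_CF_iff, numTransmit_pairState]

lemma nu_sleepState : nu (sleepState : NetState N) = 0 := by
  simp [nu, numTransmit, sleepState]

lemma nu_mul_gam_pairState {i j : Fin N} (hij : i ≠ j) :
    nu (pairState i j) * gam (pairState i j) = 1 := by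
  have hlisten : numListen (pairState i j) = 1 :=
    Finset.card_eq_one.mpr ⟨j, by ext k; simp [pairState_eq_listen_iff hij]⟩
  simp [nu, gam, numTransmit_pairState, hlisten]

lemma nodeInd_pairState_listen {i j : Fin N} (hij : i ≠ j) (k : Fin N) :
    nodeInd (pairState i j) k .l = if k = j then 1 else 0 := by
  simp [nodeInd, pairState_eq_listen_iff hij]

/-- All nodes sleep with probability `c`; with probability `a i j`, node `i` transmits and
only `j` listens. -/
noncomputable def pairMix (c : ℝ) (a : Fin N → Fin N → ℝ) : NetState N → ℝ :=
  Pi.single sleepState c + ∑ i, ∑ j ∈ univ.erase i, Pi.single (pairState i j) (a i j)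

section pairMix

variable {c : ℝ} {a : Fin N → Fin N → ℝ}

lemma pairMix_nonneg (hc : 0 ≤ c) (ha : ∀ i j, i ≠ j → 0 ≤ a i j) (w : NetState N) :
    0 ≤ pairMix c a w := by
  have : (0 : NetState N → ℝ) ≤ pairMix c a :=
    add_nonneg (Pi.single_nonneg.mpr hc) (Finset.sum_nonneg fun i _ => Finset.sum_nonneg
      fun j hj => Pi.single_nonneg.mpr (ha i j (Finset.ne_of_mem_erase hj).symm))
  exact this w

lemma pairMix_eq_zero_of_notMem {w : NetState N} (hw : w ∉ CF N) : pairMix c a w = 0 := by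
  have hsleep : w ≠ sleepState := fun h => hw (h ▸ sleepState_mem_CF)
  have hpair (i j : Fin N) : w ≠ pairState i j := fun h => hw (h ▸ pairState_mem_CF i j)
  simp [pairMix, Finset.sum_apply, hsleep, hpair]

lemma stateMean_single {w₀ : NetState N} (hw₀ : w₀ ∈ CF N) (c : ℝ) (f : NetState N → ℝ) :
    stateMean (Pi.single w₀ c) f = c * f w₀ := by
  simp [stateMean, Pi.single_apply, hw₀]

lemma stateMean_pairMix (f : NetState N → ℝ) :
    stateMean (pairMix c a) f =
      c * f sleepState + ∑ i, ∑ j ∈ univ.erase i, a i j * f (pairState i j) := by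
  simp only [pairMix, stateMean_add_left, stateMean_sum_left, stateMean_single sleepState_mem_CF,
    stateMean_single (pairState_mem_CF _ _)]

lemma stateMean_pairMix_one :
    stateMean (pairMix c a) (fun _ => 1) = c + ∑ i, ∑ j ∈ univ.erase i, a i j := by
  simp [stateMean_pairMix]

lemma stateMean_pairMix_transmit (k : Fin N) :
    stateMean (pairMix c a) (nodeInd · k .x) = ∑ j ∈ univ.erase k, a k j := by
  simp [stateMean_pairMix, nodeInd, sleepState, pairState_eq_transmit_iff]

lemma stateMean_pairMix_listen (k : Fin N) :
    stateMean (pairMix c a) (nodeInd · k .l) = ∑ i ∈ univ.erase k, a i k := by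
  have hinner (i : Fin N) :
      ∑ j ∈ univ.erase i, a i j * nodeInd (pairState i j) k .l = if i = k then 0 else a i k := by
    rw [Finset.sum_congr rfl fun j hj => by
      rw [nodeInd_pairState_listen (Finset.ne_of_mem_erase hj).symm, mul_ite, mul_one, mul_zero]]
    simp [Finset.sum_ite_eq, eq_comm]
  have hsleep : nodeInd sleepState k .l = 0 := by simp [nodeInd, sleepState]
  simp only [stateMean_pairMix, hinner, hsleep, mul_zero, zero_add]
  rw [← Finset.sum_erase_add _ _ (Finset.mem_univ k), if_pos rfl, add_zero]
  exact Finset.sum_congr rfl fun i hi => if_neg (Finset.ne_of_mem_erase hi)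

lemma stateMean_pairMix_nu_mul_gam :
    stateMean (pairMix c a) (fun w => nu w * gam w) = ∑ i, ∑ j ∈ univ.erase i, a i j := by
  rw [stateMean_pairMix, nu_sleepState, zero_mul, mul_zero, zero_add]
  refine Finset.sum_congr rfl fun i _ => Finset.sum_congr rfl fun j hj => ?_
  rw [nu_mul_gam_pairState (Finset.ne_of_mem_erase hj).symm, mul_one]

end pairMix

theorem exists_P1Feasible_of_P3Feasible {L X ρ : Fin N → ℝ} (hL : ∀ i, 0 ≤ L i)
    {α β : Fin N → ℝ} {χ : Fin N → Fin N → ℝ} (h : P3Feasible N L X ρ α β χ) :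
    ∃ π, P1Feasible N L X ρ π ∧ stateMean π (fun w => nu w * gam w) = ∑ i, β i := by
  obtain ⟨-, hβ, hχ, hρ, -, hβsum, hβχ, hαχ⟩ := h
  have hrow0 (i : Fin N) : 0 ≤ ∑ k ∈ univ.erase i, χ i k :=
    Finset.sum_nonneg fun k hk => hχ i k (Finset.ne_of_mem_erase hk).symm
  -- Row `i` of `χ` rescaled to total `β i`; on an empty row `β i = 0`, and `x / 0 = 0` makes it `0`.
  set a : Fin N → Fin N → ℝ := fun i j => χ i j * (β i / ∑ k ∈ univ.erase i, χ i k)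
  have ha0 (i j : Fin N) (hij : i ≠ j) : 0 ≤ a i j :=
    mul_nonneg (hχ i j hij) (div_nonneg (hβ i).1 (hrow0 i))
  have ha_le (i j : Fin N) (hij : i ≠ j) : a i j ≤ χ i j :=
    mul_le_of_le_one_right (hχ i j hij) (div_le_one_of_le₀ (hβχ i) (hrow0 i))
  have hrow (i : Fin N) : ∑ j ∈ univ.erase i, a i j = β i := by
    rw [← Finset.sum_mul]
    by_cases hzero : ∑ k ∈ univ.erase i, χ i k = 0
    · rw [hzero, zero_mul]
      exact (le_antisymm (hzero ▸ hβχ i) (hβ i).1).symm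
    · exact mul_div_cancel₀ _ hzero
  refine ⟨pairMix (1 - ∑ i, β i) a, p1Feasible_iff.mpr ⟨pairMix_nonneg (sub_nonneg.2 hβsum) ha0,
    fun w hw => pairMix_eq_zero_of_notMem hw, ?_, fun i => ?_⟩, ?_⟩
  · simp only [stateMean_pairMix_one, hrow]
    ring
  · rw [stateMean_pairMix_listen, stateMean_pairMix_transmit, hrow]
    refine le_trans ?_ (hρ i)
    gcongr
    · exact hL i
    · rw [hαχ]
      exact Finset.sum_le_sum fun j hj => ha_le j i (Finset.ne_of_mem_erase hj)
  · simp only [stateMean_pairMix_nu_mul_gam, hrow]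

end

theorem oracle_anyput_eq_P3_general (N : ℕ) (L X ρ : Fin N → ℝ)
    (hL : ∀ i, 0 < L i) (hX : ∀ i, 0 < X i) :
    sSup {v : ℝ | ∃ π : NetState N → ℝ, P1Feasible N L X ρ π ∧
        v = ∑ w ∈ CF N, π w * (nu w * gam w)}
      = sSup {v : ℝ | ∃ α β : Fin N → ℝ, ∃ χ : Fin N → Fin N → ℝ,
          P3Feasible N L X ρ α β χ ∧ v = ∑ i, β i} := by
  congr 1
  ext v
  constructor
  · rintro ⟨π, hπ, rfl⟩
    obtain ⟨α, β, χ, h, hvalue⟩ := exists_P3Feasible_of_P1Feasible (fun i => (hL i).le)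
      (fun i => (hX i).le) hπ
    exact ⟨α, β, χ, h, hvalue.symm⟩
  · rintro ⟨α, β, χ, h, rfl⟩
    obtain ⟨π, hπ, hvalue⟩ := exists_P1Feasible_of_P3Feasible (fun i => (hL i).le) h
    exact ⟨π, hπ, hvalue.symm⟩

/-- The optimal value of (P1) with the anyput state throughput
`T_w = ν_w · γ_w` equals the optimal value of (P3). -/
theorem oracle_anyput_eq_P3 (N : ℕ) (hN : 2 ≤ N) (L X ρ : Fin N → ℝ)
    (hL : ∀ i, 0 < L i) (hX : ∀ i, 0 < X i) (hρ : ∀ i, 0 < ρ i) :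
    sSup {v : ℝ | ∃ π : NetState N → ℝ, P1Feasible N L X ρ π ∧
        v = ∑ w ∈ CF N, π w * (nu w * gam w)}
      = sSup {v : ℝ | ∃ α β : Fin N → ℝ, ∃ χ : Fin N → Fin N → ℝ,
          P3Feasible N L X ρ α β χ ∧ v = ∑ i, β i} :=
  oracle_anyput_eq_P3_general N L X ρ hL hX
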